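/- arXiv:2310.14087 — 2 statements merged into one kernel-verified Lean document; each statement's English description precedes it below -/
import Mathlib

section
/- Let γ̂ ∈ ℝⁿ and X̂ be a symmetric positive semidefinite n×n matrix satisfying: (i) (1/(2λ₂))Qγ̂ − (1/(2λ₂))z − Φ(X̂) = 0, and (ii) X̂ = proj_{S₊ⁿ}(X̂ − (Φ*(γ̂) + λ₁I)), where λ₁, λ₂ > 0, Q is symmetric positive semidefinite, Φ(X)_i = ⟨X, Φ_iΦ_iᵀ⟩ and Φ*(γ) = Σᵢ γᵢΦ_iΦ_iᵀ. Then γ̂ minimizes f(γ) = (1/(4λ₂))γᵀQγ − (1/(2λ₂))γᵀz over the set {γ : Φ*(γ) + λ₁I ⪰ 0}. -/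
open Matrix

/-- Frobenius (trace) inner product of two matrices. -/
noncomputable def frobInner {n : ℕ} (A B : Matrix (Fin n) (Fin n) ℝ) : ℝ := (Aᵀ * B).trace

/-- Frobenius norm of a matrix. -/
noncomputable def frobNorm {n : ℕ} (A : Matrix (Fin n) (Fin n) ℝ) : ℝ :=
  Real.sqrt (frobInner A A)

/-- `p` is the Frobenius-norm projection of `Z` onto the PSD cone. -/
def IsPSDProj {n : ℕ} (Z p : Matrix (Fin n) (Fin n) ℝ) : Prop :=
  p.PosSemidef ∧ ∀ Y : Matrix (Fin n) (Fin n) ℝ, Y.PosSemidef → frobNorm (Z - p) ≤ frobNorm (Z - Y)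

namespace FrobAux

variable {n : ℕ}

lemma eq_sum (A B : Matrix (Fin n) (Fin n) ℝ) :
    frobInner A B = ∑ i, ∑ j, A j i * B j i := by
  simp [frobInner, Matrix.trace, Matrix.diag, Matrix.mul_apply, Matrix.transpose_apply]

lemma comm (A B : Matrix (Fin n) (Fin n) ℝ) : frobInner A B = frobInner B A := by
  rw [eq_sum, eq_sum]
  exact Finset.sum_congr rfl fun i _ => Finset.sum_congr rfl fun j _ => mul_comm _ _

lemma add_right (A B C : Matrix (Fin n) (Fin n) ℝ) :
    frobInner A (B + C) = frobInner A B + frobInner A C := by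
  simp [eq_sum, mul_add, Finset.sum_add_distrib]

lemma sub_right (A B C : Matrix (Fin n) (Fin n) ℝ) :
    frobInner A (B - C) = frobInner A B - frobInner A C := by
  simp [eq_sum, mul_sub, Finset.sum_sub_distrib]

lemma smul_right (c : ℝ) (A B : Matrix (Fin n) (Fin n) ℝ) :
    frobInner A (c • B) = c * frobInner A B := by
  simp [eq_sum, Finset.mul_sum, mul_left_comm]

lemma sum_right {ι : Type*} (s : Finset ι) (A : Matrix (Fin n) (Fin n) ℝ)
    (g : ι → Matrix (Fin n) (Fin n) ℝ) :
    frobInner A (∑ i ∈ s, g i) = ∑ i ∈ s, frobInner A (g i) := by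
  classical
  induction s using Finset.induction_on with
  | empty => simp [eq_sum]
  | @insert a s h ih => rw [Finset.sum_insert h, Finset.sum_insert h, add_right, ih]

lemma self_nonneg (A : Matrix (Fin n) (Fin n) ℝ) : 0 ≤ frobInner A A := by
  rw [eq_sum]
  exact Finset.sum_nonneg fun i _ => Finset.sum_nonneg fun j _ => mul_self_nonneg _

lemma psd_nonneg {A B : Matrix (Fin n) (Fin n) ℝ} (hA : A.PosSemidef) (hB : B.PosSemidef) :
    0 ≤ frobInner A B := by
  open MatrixOrder Matrix.Norms.L2Operator in
  obtain ⟨C, hC⟩ := CStarAlgebra.nonneg_iff_eq_star_mul_self.mp hB.nonneg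
  rw [Matrix.star_eq_conjTranspose] at hC
  have hAt : Aᵀ = A := by
    rw [← Matrix.conjTranspose_eq_transpose_of_trivial, hA.1]
  have key : frobInner A B = Matrix.trace (C * A * Cᴴ) := by
    rw [frobInner, hAt, hC, ← Matrix.mul_assoc, Matrix.trace_mul_comm, Matrix.mul_assoc]
  rw [key, Matrix.trace]
  refine Finset.sum_nonneg fun r _ => ?_
  have h2 := hA.dotProduct_mulVec_nonneg (C r)
  rw [Matrix.diag_apply, Matrix.mul_mul_apply]
  simpa using h2

end FrobAux

lemma neg_neg' {n : ℕ} (A B : Matrix (Fin n) (Fin n) ℝ) :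
    frobInner (-A) (-B) = frobInner A B := by
  simp [FrobAux.eq_sum]


/-- If `(γ̂, X̂)` with `X̂ ⪰ 0` satisfies `(1/(2λ₂))Qγ̂ − (1/(2λ₂))z − Φ(X̂) = 0` and the
projection fixed point `X̂ = proj_{S₊ⁿ}(X̂ − (Φ*(γ̂) + λ₁ I))`, then `γ̂` minimizes
`f(γ) = (1/(4λ₂))γᵀQγ − (1/(2λ₂))γᵀz` over `{γ : Φ*(γ) + λ₁ I ⪰ 0}`. -/
theorem stmt_6 {n : ℕ} (Φ : Fin n → (Fin n → ℝ))
    (Q : Matrix (Fin n) (Fin n) ℝ) (hQ : Q.PosSemidef) (z : Fin n → ℝ)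
    (l1 l2 : ℝ) (hl1 : 0 < l1) (hl2 : 0 < l2)
    (opΦ : Matrix (Fin n) (Fin n) ℝ → (Fin n → ℝ))
    (hopΦ : ∀ X i, opΦ X i = frobInner X (vecMulVec (Φ i) (Φ i)))
    (opΦstar : (Fin n → ℝ) → Matrix (Fin n) (Fin n) ℝ)
    (hopΦstar : ∀ γ, opΦstar γ = ∑ i, γ i • vecMulVec (Φ i) (Φ i))
    (f : (Fin n → ℝ) → ℝ)
    (hf : ∀ γ, f γ = (1 / (4 * l2)) * (γ ⬝ᵥ Q.mulVec γ) - (1 / (2 * l2)) * (γ ⬝ᵥ z))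
    (γhat : Fin n → ℝ) (Xhat : Matrix (Fin n) (Fin n) ℝ) (hXhat : Xhat.PosSemidef)
    (heq : (1 / (2 * l2)) • Q.mulVec γhat - (1 / (2 * l2)) • z - opΦ Xhat = 0)
    (hfix : IsPSDProj (Xhat - (opΦstar γhat + l1 • (1 : Matrix (Fin n) (Fin n) ℝ))) Xhat) :
    ∀ γ : Fin n → ℝ, (opΦstar γ + l1 • (1 : Matrix (Fin n) (Fin n) ℝ)).PosSemidef →
      f γhat ≤ f γ := by
  set S := opΦstar γhat + l1 • (1 : Matrix (Fin n) (Fin n) ℝ) with hS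
  set x := frobInner Xhat Xhat with hxdef
  set α := frobInner Xhat S with hαdef
  set s := frobInner S S with hsdef
  -- nonneg scalar multiples of Xhat are PSD
  have hsmul : ∀ c : ℝ, 0 ≤ c → (c • Xhat).PosSemidef := by
    intro c hc
    refine Matrix.PosSemidef.of_dotProduct_mulVec_nonneg ?_ fun v => ?_
    · have hXsymm : ∀ i j, Xhat j i = Xhat i j := by
        intro i j
        have h := congrFun (congrFun hXhat.1 i) j
        simpa [Matrix.conjTranspose_apply] using h
      ext i j
      simp [Matrix.conjTranspose_apply, Matrix.smul_apply, hXsymm]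
    · rw [Matrix.smul_mulVec, dotProduct_smul]
      exact mul_nonneg hc (hXhat.dotProduct_mulVec_nonneg v)
  -- expansion of the quadratic
  have expand : ∀ u : ℝ, frobInner (u • Xhat - S) (u • Xhat - S)
      = u ^ 2 * x - 2 * u * α + s := by
    intro u
    have h1 : frobInner (u • Xhat - S) Xhat = u * x - α := by
      rw [FrobAux.comm, FrobAux.sub_right, FrobAux.smul_right]
    have h2 : frobInner (u • Xhat - S) S = u * α - s := by
      rw [FrobAux.comm, FrobAux.sub_right, FrobAux.smul_right, FrobAux.comm S Xhat]
    rw [FrobAux.sub_right, FrobAux.smul_right, h1, h2]; ring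
  -- the variational inequality
  have key : ∀ u : ℝ, u ≤ 1 → 0 ≤ u ^ 2 * x - 2 * u * α := by
    intro u hu
    have hc : (0:ℝ) ≤ 1 - u := by linarith
    have hY := hfix.2 ((1 - u) • Xhat) (hsmul _ hc)
    rw [frobNorm, frobNorm] at hY
    have h1 : Xhat - S - Xhat = -S := by abel
    have h2 : Xhat - S - (1 - u) • Xhat = u • Xhat - S := by
      rw [sub_smul, one_smul]; abel
    rw [h1, h2] at hY
    have ha := FrobAux.self_nonneg (-S)
    have hb := FrobAux.self_nonneg (u • Xhat - S)
    have hle : frobInner (-S) (-S) ≤ frobInner (u • Xhat - S) (u • Xhat - S) := by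
      nlinarith [Real.sq_sqrt ha, Real.sq_sqrt hb,
        Real.sqrt_nonneg (frobInner (-S) (-S)),
        Real.sqrt_nonneg (frobInner (u • Xhat - S) (u • Xhat - S))]
    rw [neg_neg', expand u] at hle
    linarith
  -- complementarity: α = 0
  have hx : 0 ≤ x := FrobAux.self_nonneg Xhat
  have hα : α = 0 := by
    rcases eq_or_lt_of_le hx with hx0 | hxpos
    · have k1 := key 1 le_rfl
      have k2 := key (-1) (by norm_num)
      nlinarith
    · by_cases hax : α ≤ x
      · have hle : α / x ≤ 1 := by rw [div_le_one hxpos]; exact hax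
        have h := key (α / x) hle
        have hval : (α / x) ^ 2 * x - 2 * (α / x) * α = -(α ^ 2) / x := by
          field_simp; ring
        rw [hval] at h
        have h2 : 0 ≤ -(α ^ 2) := by
          have := mul_nonneg h (le_of_lt hxpos)
          rwa [div_mul_cancel₀] at this
          exact ne_of_gt hxpos
        nlinarith [sq_nonneg α]
      · have h := key 1 le_rfl
        nlinarith
  -- main convexity argument
  intro γ hγ
  have hQt : Qᵀ = Q := by
    rw [← Matrix.conjTranspose_eq_transpose_of_trivial, hQ.1]
  have hsym : ∀ v w : Fin n → ℝ, v ⬝ᵥ Q *ᵥ w = w ⬝ᵥ Q *ᵥ v := by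
    intro v w
    rw [Matrix.dotProduct_mulVec]
    conv_lhs => rw [← hQt]
    rw [Matrix.vecMul_transpose, dotProduct_comm]
  have hΦeq : (1 / (2 * l2)) • Q.mulVec γhat - (1 / (2 * l2)) • z = opΦ Xhat := by
    rwa [sub_eq_zero] at heq
  set A1 := γ ⬝ᵥ Q *ᵥ γ with hA1
  set B1 := γhat ⬝ᵥ Q *ᵥ γhat with hB1
  set C1 := γ ⬝ᵥ Q *ᵥ γhat with hC1
  -- gradient dot product
  have hgrad : (opΦ Xhat) ⬝ᵥ (γ - γhat)
      = (1 / (2 * l2)) * (C1 - B1) - (1 / (2 * l2)) * (γ ⬝ᵥ z - γhat ⬝ᵥ z) := by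
    rw [← hΦeq, sub_dotProduct, smul_dotProduct, smul_dotProduct, dotProduct_sub,
      dotProduct_sub, dotProduct_comm (Q *ᵥ γhat) γ, dotProduct_comm (Q *ᵥ γhat) γhat,
      dotProduct_comm z γ, dotProduct_comm z γhat]
    simp only [smul_eq_mul]
    rfl
  -- identify gradient dot with frobenius inner products
  have hdot : (opΦ Xhat) ⬝ᵥ (γ - γhat)
      = frobInner Xhat (opΦstar γ) - frobInner Xhat (opΦstar γhat) := by
    simp only [hopΦstar, FrobAux.sum_right, FrobAux.smul_right, dotProduct, hopΦ,
      Pi.sub_apply]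
    rw [← Finset.sum_sub_distrib]
    exact Finset.sum_congr rfl fun i _ => by ring
  -- quadratic term nonneg
  have hquad : 0 ≤ A1 + B1 - 2 * C1 := by
    have h := hQ.dotProduct_mulVec_nonneg (γ - γhat)
    have hexp : (γ - γhat) ⬝ᵥ Q *ᵥ (γ - γhat) = A1 + B1 - 2 * C1 := by
      rw [Matrix.mulVec_sub, dotProduct_sub, sub_dotProduct, sub_dotProduct,
        hsym γhat γ]
      ring
    rw [star_trivial, hexp] at h
    exact h
  -- PSD inner products
  have hpos : 0 ≤ frobInner Xhat (opΦstar γ + l1 • (1 : Matrix (Fin n) (Fin n) ℝ)) :=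
    FrobAux.psd_nonneg hXhat hγ
  have hdiff : frobInner Xhat (opΦstar γ) - frobInner Xhat (opΦstar γhat)
      = frobInner Xhat (opΦstar γ + l1 • (1 : Matrix (Fin n) (Fin n) ℝ)) - α := by
    rw [hαdef, hS, FrobAux.add_right, FrobAux.add_right]
    ring
  -- conclude
  rw [hf γ, hf γhat]
  have hgd : frobInner Xhat (opΦstar γ) - frobInner Xhat (opΦstar γhat)
      = (1 / (2 * l2)) * (C1 - B1) - (1 / (2 * l2)) * (γ ⬝ᵥ z - γhat ⬝ᵥ z) := by
    rw [← hdot, hgrad]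
  have hge : 0 ≤ frobInner Xhat (opΦstar γ) - frobInner Xhat (opΦstar γhat) := by
    rw [hdiff, hα]; linarith
  have h4 : 0 < 1 / (4 * l2) := by positivity
  have h2 : (0:ℝ) < 2 * l2 := by positivity
  -- f γ - f γhat = (1/(4l2)) (A1 + B1 - 2 C1) + (gradient term)
  have hfinal : (1 / (4 * l2)) * A1 - (1 / (2 * l2)) * (γ ⬝ᵥ z)
      - ((1 / (4 * l2)) * B1 - (1 / (2 * l2)) * (γhat ⬝ᵥ z))
      = (1 / (4 * l2)) * (A1 + B1 - 2 * C1)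
        + ((1 / (2 * l2)) * (C1 - B1) - (1 / (2 * l2)) * (γ ⬝ᵥ z - γhat ⬝ᵥ z)) := by
    field_simp
    ring
  nlinarith [mul_nonneg (le_of_lt h4) hquad, hgd, hge, hfinal]
end

section
/- Let R: ℝᵐ → ℝᵐ and suppose there exist constants C, δ > 0, τκ ∈ [0,1), θ ≥ 0 and points w, Δw with: (a) ‖R(w + Δw) − R(w) − J[Δw]‖ ≤ 2C‖Δw‖² for some linear map J, (b) ‖(J + μI)[Δw] + R(w)‖ ≤ τκ‖R(w)‖‖Δw‖ with μ = θ‖R(w)‖, and (c) ‖(J + μI)[Δw]‖ ≥ δ‖Δw‖. Then ‖Δw‖ ≤ (1/δ)(1 + τκ‖Δw‖)‖R(w)‖ and ‖R(w + Δw)‖ ≤ ‖R(w)‖² · ((2C/δ²)(1 + τκ‖Δw‖)² + ((θ + τκ)/δ)(1 + τκ‖Δw‖)). -/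
/-- Key quantitative inequality for one inexact regularized semismooth Newton step:
under strong semismoothness (a), inexactness (b), and a lower bound on the regularized
Jacobian (c), the step is bounded by the residual and the residual contracts quadratically. -/
theorem stmt_13 {m : ℕ} (R : EuclideanSpace ℝ (Fin m) → EuclideanSpace ℝ (Fin m))
    (C δ : ℝ) (hC : 0 < C) (hδ : 0 < δ)
    (tk : ℝ) (htk : 0 ≤ tk ∧ tk < 1) (θ : ℝ) (hθ : 0 ≤ θ)
    (w Δw : EuclideanSpace ℝ (Fin m))
    (J : EuclideanSpace ℝ (Fin m) →ₗ[ℝ] EuclideanSpace ℝ (Fin m))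
    (μ : ℝ) (hμ : μ = θ * ‖R w‖)
    (ha : ‖R (w + Δw) - R w - J Δw‖ ≤ 2 * C * ‖Δw‖ ^ 2)
    (hb : ‖(J Δw + μ • Δw) + R w‖ ≤ tk * ‖R w‖ * ‖Δw‖)
    (hc : δ * ‖Δw‖ ≤ ‖J Δw + μ • Δw‖) :
    ‖Δw‖ ≤ (1 / δ) * (1 + tk * ‖Δw‖) * ‖R w‖ ∧
    ‖R (w + Δw)‖ ≤ ‖R w‖ ^ 2 *
      ((2 * C / δ ^ 2) * (1 + tk * ‖Δw‖) ^ 2 + ((θ + tk) / δ) * (1 + tk * ‖Δw‖)) := by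
  obtain ⟨htk0, htk1⟩ := htk
  set a := ‖Δw‖ with haa
  set r := ‖R w‖ with hrr
  have h0a : 0 ≤ a := norm_nonneg _
  have h0r : 0 ≤ r := norm_nonneg _
  -- step bound
  have key : δ * a ≤ (1 + tk * a) * r := by
    have h1 : ‖J Δw + μ • Δw‖ ≤ ‖(J Δw + μ • Δw) + R w‖ + ‖R w‖ := by
      calc ‖J Δw + μ • Δw‖ = ‖((J Δw + μ • Δw) + R w) - R w‖ := by rw [add_sub_cancel_right]
        _ ≤ ‖(J Δw + μ • Δw) + R w‖ + ‖R w‖ := norm_sub_le _ _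
    nlinarith [hc.trans (h1.trans (by linarith : ‖(J Δw + μ • Δw) + R w‖ + ‖R w‖ ≤ tk * r * a + r))]
  have step : a ≤ (1 / δ) * (1 + tk * a) * r := by
    rw [div_mul_eq_mul_div, div_mul_eq_mul_div, le_div_iff₀ hδ]
    linarith [key]
  refine ⟨step, ?_⟩
  -- residual bound
  have hdecomp : R (w + Δw) = (R (w + Δw) - R w - J Δw) + ((J Δw + μ • Δw) + R w) - μ • Δw := by
    abel
  have hres : ‖R (w + Δw)‖ ≤ 2 * C * a ^ 2 + tk * r * a + θ * r * a := by
    calc ‖R (w + Δw)‖ = ‖(R (w + Δw) - R w - J Δw) + ((J Δw + μ • Δw) + R w) - μ • Δw‖ := by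
          rw [← hdecomp]
      _ ≤ ‖(R (w + Δw) - R w - J Δw) + ((J Δw + μ • Δw) + R w)‖ + ‖μ • Δw‖ := norm_sub_le _ _
      _ ≤ ‖R (w + Δw) - R w - J Δw‖ + ‖(J Δw + μ • Δw) + R w‖ + ‖μ • Δw‖ := by
          gcongr; exact norm_add_le _ _
      _ ≤ 2 * C * a ^ 2 + tk * r * a + θ * r * a := by
          have : ‖μ • Δw‖ = θ * r * a := by
            rw [norm_smul, hμ, Real.norm_eq_abs, abs_of_nonneg (by positivity)]
          linarith
  have hsq : a ^ 2 ≤ (1 / δ) ^ 2 * (1 + tk * a) ^ 2 * r ^ 2 := by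
    have h1 : 0 ≤ (1 / δ) * (1 + tk * a) * r := le_trans h0a step
    nlinarith [step]
  have h1p : 0 ≤ 1 + tk * a := by positivity
  have hδ2 : (0:ℝ) < δ ^ 2 := by positivity
  calc ‖R (w + Δw)‖ ≤ 2 * C * a ^ 2 + tk * r * a + θ * r * a := hres
    _ ≤ 2 * C * ((1 / δ) ^ 2 * (1 + tk * a) ^ 2 * r ^ 2) + (tk + θ) * r * ((1 / δ) * (1 + tk * a) * r) := by
        have := mul_le_mul_of_nonneg_left step (by positivity : (0:ℝ) ≤ (tk + θ) * r)
        nlinarith [hsq, mul_le_mul_of_nonneg_left hsq (le_of_lt hC)]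
    _ = r ^ 2 * ((2 * C / δ ^ 2) * (1 + tk * a) ^ 2 + ((θ + tk) / δ) * (1 + tk * a)) := by
        field_simp; ring
end
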